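/- Assume ∫_ℝ φ(t) dt = 1 and that φ satisfies the refinement relation φ(x) = ∑_{k=0}^{3N−1} p_k φ(2x − k) for almost every x, with real coefficients p_k satisfying ∑_{k=0}^{3N−1} p_k = 2. Then for every integer n ≥ 2, the value of the n-tuple integral at the right endpoint of the support satisfies φ^{∫n}(3N−1) = [1/(2^n − 2)] · ∑_{i=1}^{n−1} ∑_{k=0}^{3N−1} p_k · [(3N−1−k)^i / i!] · φ^{∫(n−i)}(3N−1). -/

import Mathlib

/-!
Integrating the refinement relation `n` times gives
`2 ^ n * φ^{∫n}(x) = ∑ₖ pₖ φ^{∫n}(2x - k)` for `n ≥ 1`: the substitution `s = 2t - k` only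
produces boundary terms `φ^{∫n}(-k)`, which vanish because `φ` is supported in `[0, ∞)`.
To the right of the support endpoint `a = 3N - 1` every `φ^{∫n}` is a polynomial, namely its
Taylor polynomial `∑_{j<n} φ^{∫(n-j)}(a) (x - a)^j / j!` at `a`. Evaluating the relation at
`x = a`, where all points `2a - k` lie to the right of `a`, the `j = 0` terms add up to
`(∑ₖ pₖ) φ^{∫n}(a) = 2 φ^{∫n}(a)`, and solving for `φ^{∫n}(a)` gives the formula.
-/

open MeasureTheory

/-- The `n`-tuple iterated integral `g^{∫n}(x) = ∫₀^x ∫₀^{ξ_n} ⋯ ∫₀^{ξ₂} g(ξ₁) dξ₁ ⋯ dξ_n`. -/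
noncomputable def iterInt (g : ℝ → ℝ) : ℕ → ℝ → ℝ
  | 0 => g
  | n + 1 => fun x => ∫ t in (0 : ℝ)..x, iterInt g n t

open Finset intervalIntegral

section IterInt

variable {φ : ℝ → ℝ}

lemma iterInt_zero : iterInt φ 0 = φ := rfl

lemma iterInt_succ (n : ℕ) (x : ℝ) :
    iterInt φ (n + 1) x = ∫ t in (0 : ℝ)..x, iterInt φ n t := rfl

lemma iterInt_intervalIntegrable (hφ : ∀ a b : ℝ, IntervalIntegrable φ volume a b) :
    ∀ n (a b : ℝ), IntervalIntegrable (iterInt φ n) volume a b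
  | 0 => hφ
  | n + 1 => fun a b =>
    (continuous_primitive (iterInt_intervalIntegrable hφ n) 0).intervalIntegrable a b

lemma integral_from_zero_eq_zero_of_nonpos {f : ℝ → ℝ} (hf : ∀ t < 0, f t = 0) {x : ℝ}
    (hx : x ≤ 0) : ∫ t in (0 : ℝ)..x, f t = 0 := by
  rw [integral_symm, integral_of_le hx, integral_Ioc_eq_integral_Ioo,
    setIntegral_congr_fun measurableSet_Ioo (g := 0) fun t ht => hf t ht.2]
  simp

lemma iterInt_eq_zero_of_neg (hφ : ∀ t < 0, φ t = 0) : ∀ n, ∀ t < 0, iterInt φ n t = 0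
  | 0 => hφ
  | n + 1 => fun _ ht =>
    integral_from_zero_eq_zero_of_nonpos (iterInt_eq_zero_of_neg hφ n) ht.le

lemma intervalIntegrable_comp_two_mul_sub {f : ℝ → ℝ}
    (hf : ∀ a b : ℝ, IntervalIntegrable f volume a b) (c a b : ℝ) :
    IntervalIntegrable (fun t => f (2 * t - c)) volume a b := by
  simpa using ((hf (2 * a - c) (2 * b - c)).comp_sub_right c).comp_mul_left (c := 2)

lemma two_mul_integral_comp_two_mul_sub {f : ℝ → ℝ}
    (hf : ∀ a b : ℝ, IntervalIntegrable f volume a b) (hf0 : ∀ t < 0, f t = 0) {c : ℝ}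
    (hc : 0 ≤ c) (x : ℝ) :
    2 * ∫ t in (0 : ℝ)..x, f (2 * t - c) = ∫ t in (0 : ℝ)..(2 * x - c), f t := by
  rw [integral_comp_mul_sub _ two_ne_zero, ← integral_interval_sub_left (hf 0 _) (hf 0 _)]
  simp [integral_from_zero_eq_zero_of_nonpos hf0 (neg_nonpos.2 hc)]

lemma two_mul_mul_integral_of_refinement {f : ℝ → ℝ}
    (hf : ∀ a b : ℝ, IntervalIntegrable f volume a b) (hf0 : ∀ t < 0, f t = 0)
    {s : Finset ℕ} {p : ℕ → ℝ} {c : ℝ}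
    (href : ∀ᵐ t : ℝ, c * f t = ∑ k ∈ s, p k * f (2 * t - k)) (x : ℝ) :
    2 * c * ∫ t in (0 : ℝ)..x, f t = ∑ k ∈ s, p k * ∫ t in (0 : ℝ)..(2 * x - k), f t := by
  calc 2 * c * ∫ t in (0 : ℝ)..x, f t
      = 2 * ∫ t in (0 : ℝ)..x, ∑ k ∈ s, p k * f (2 * t - k) := by
        rw [mul_assoc, ← intervalIntegral.integral_const_mul,
          integral_congr_ae (href.mono fun t ht _ => ht)]
    _ = ∑ k ∈ s, p k * (2 * ∫ t in (0 : ℝ)..x, f (2 * t - k)) := by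
        rw [integral_finsetSum fun (k : ℕ) _ =>
            (intervalIntegrable_comp_two_mul_sub hf k 0 x).const_mul _, mul_sum]
        refine sum_congr rfl fun k _ => ?_
        rw [intervalIntegral.integral_const_mul]
        ring
    _ = _ := by
        simp_rw [two_mul_integral_comp_two_mul_sub hf hf0 (Nat.cast_nonneg _)]

lemma iterInt_refinement (hφ : ∀ a b : ℝ, IntervalIntegrable φ volume a b)
    (hφ0 : ∀ t < 0, φ t = 0) {s : Finset ℕ} {p : ℕ → ℝ}
    (href : ∀ᵐ t : ℝ, φ t = ∑ k ∈ s, p k * φ (2 * t - k)) :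
    ∀ n x, 2 ^ (n + 1) * iterInt φ (n + 1) x = ∑ k ∈ s, p k * iterInt φ (n + 1) (2 * x - k)
  | 0, x => by
    simp only [zero_add, pow_one, iterInt_succ, iterInt_zero]
    simpa only [mul_one] using
      two_mul_mul_integral_of_refinement hφ hφ0 (c := 1) (by simpa only [one_mul] using href) x
  | n + 1, x => by
    rw [pow_succ']
    exact two_mul_mul_integral_of_refinement (iterInt_intervalIntegrable hφ (n + 1))
      (iterInt_eq_zero_of_neg hφ0 (n + 1)) (ae_of_all _ (iterInt_refinement hφ hφ0 href n)) x

lemma integral_eq_taylor_of_eqOn_Ioc {f : ℝ → ℝ} {a x : ℝ} (hax : a ≤ x) (c : ℕ → ℝ) (n : ℕ)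
    (hf : ∀ t ∈ Set.Ioc a x, f t = ∑ j ∈ range n, c j * (t - a) ^ j / j.factorial) :
    ∫ t in a..x, f t = ∑ j ∈ range n, c j * (x - a) ^ (j + 1) / (j + 1).factorial := by
  rw [integral_congr_ae (ae_of_all _ fun t ht => hf t (by rwa [Set.uIoc_of_le hax] at ht)),
    integral_finsetSum fun j _ => (by fun_prop : Continuous _).intervalIntegrable _ _]
  refine sum_congr rfl fun j _ => ?_
  rw [intervalIntegral.integral_div, intervalIntegral.integral_const_mul,
    integral_comp_sub_right (· ^ j), integral_pow, Nat.factorial_succ]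
  push_cast
  field_simp
  ring

lemma iterInt_eq_taylor_of_le {a : ℝ} (hφ : ∀ a b : ℝ, IntervalIntegrable φ volume a b)
    (hφa : ∀ t > a, φ t = 0) : ∀ n x, a ≤ x →
    iterInt φ (n + 1) x = ∑ j ∈ range (n + 1), iterInt φ (n + 1 - j) a * (x - a) ^ j / j.factorial
  | n, x, hax => by
    have hpoly : ∀ t ∈ Set.Ioc a x,
        iterInt φ n t = ∑ j ∈ range n, iterInt φ (n - j) a * (t - a) ^ j / j.factorial := by
      intro t ht
      match n with
      | 0 => simpa only [iterInt_zero, range_zero, sum_empty] using hφa t ht.1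
      | m + 1 => exact iterInt_eq_taylor_of_le hφ hφa m t ht.1.le
    have hii := iterInt_intervalIntegrable hφ n
    calc iterInt φ (n + 1) x = iterInt φ (n + 1) a + ∫ t in a..x, iterInt φ n t :=
          (integral_add_adjacent_intervals (hii 0 a) (hii a x)).symm
      _ = _ := by
        rw [integral_eq_taylor_of_eqOn_Ioc hax _ n hpoly, sum_range_succ' _ n]
        simp [add_comm]

end IterInt

section Endpoint

variable {φ : ℝ → ℝ} {a : ℝ} {s : Finset ℕ} {p : ℕ → ℝ}

lemma iterInt_two_mul_sub_eq_taylor (hφ : ∀ a b : ℝ, IntervalIntegrable φ volume a b)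
    (hφa : ∀ t > a, φ t = 0) {k : ℝ} (hk : k ≤ a) (m : ℕ) :
    iterInt φ (m + 1) (2 * a - k) = iterInt φ (m + 1) a +
      ∑ i ∈ Icc 1 m, (a - k) ^ i / i.factorial * iterInt φ (m + 1 - i) a := by
  rw [iterInt_eq_taylor_of_le hφ hφa m _ (by linarith),
    sum_range_eq_add_Ico _ (by omega : 0 < m + 1), Ico_add_one_right_eq_Icc]
  simp only [pow_zero, Nat.factorial_zero, Nat.cast_one, div_one, mul_one, Nat.sub_zero]
  congr 1
  refine sum_congr rfl fun i _ => ?_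
  ring

lemma two_pow_sub_two_mul_iterInt_eq (hφ : ∀ a b : ℝ, IntervalIntegrable φ volume a b)
    (hφ0 : ∀ t < 0, φ t = 0) (hφa : ∀ t > a, φ t = 0)
    (href : ∀ᵐ t : ℝ, φ t = ∑ k ∈ s, p k * φ (2 * t - k)) (hpsum : ∑ k ∈ s, p k = 2)
    (hs : ∀ k ∈ s, (k : ℝ) ≤ a) {n : ℕ} (hn : 1 ≤ n) :
    (2 ^ n - 2) * iterInt φ n a =
      ∑ i ∈ Icc 1 (n - 1), ∑ k ∈ s, p k * (a - k) ^ i / i.factorial * iterInt φ (n - i) a := by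
  obtain ⟨m, rfl⟩ : ∃ m, n = m + 1 := ⟨n - 1, by omega⟩
  calc (2 ^ (m + 1) - 2) * iterInt φ (m + 1) a
      = ∑ k ∈ s, p k * iterInt φ (m + 1) (2 * a - k) -
          (∑ k ∈ s, p k) * iterInt φ (m + 1) a := by
        rw [← iterInt_refinement hφ hφ0 href, hpsum]
        ring
    _ = ∑ k ∈ s, ∑ i ∈ Icc 1 m,
          p k * (a - k) ^ i / i.factorial * iterInt φ (m + 1 - i) a := by
        rw [sum_mul, ← sum_sub_distrib]
        refine sum_congr rfl fun k hk => ?_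
        rw [iterInt_two_mul_sub_eq_taylor hφ hφa (hs k hk), mul_add, add_sub_cancel_left, mul_sum]
        exact sum_congr rfl fun i _ => by ring
    _ = _ := by rw [add_tsub_cancel_right, sum_comm]

end Endpoint

theorem nTuple_integral_at_support_endpoint_general
    (N : ℕ) (φ : ℝ → ℝ)
    (hφmeas : Measurable φ) (hφbdd : ∃ B, ∀ t, |φ t| ≤ B)
    (hφsupp : ∀ t : ℝ, t ∉ Set.Icc (0 : ℝ) (3 * N - 1) → φ t = 0)
    (p : ℕ → ℝ)
    (href : ∀ᵐ x : ℝ ∂volume, φ x = ∑ k ∈ Finset.range (3 * N), p k * φ (2 * x - (k : ℝ)))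
    (hpsum : ∑ k ∈ Finset.range (3 * N), p k = 2)
    (n : ℕ) (hn : 2 ≤ n) :
    iterInt φ n (3 * (N : ℝ) - 1) =
      (1 / (2 ^ n - 2)) *
        ∑ i ∈ Finset.Icc 1 (n - 1), ∑ k ∈ Finset.range (3 * N),
          p k * (3 * (N : ℝ) - 1 - (k : ℝ)) ^ i / i.factorial *
            iterInt φ (n - i) (3 * (N : ℝ) - 1) := by
  obtain ⟨B, hB⟩ := hφbdd
  have hφ : ∀ a b : ℝ, IntervalIntegrable φ volume a b := fun a b =>
    intervalIntegrable_iff.2 <| Measure.integrableOn_of_bounded (by simp [Real.volume_uIoc])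
      hφmeas.aestronglyMeasurable (ae_of_all _ hB)
  have hs : ∀ k ∈ range (3 * N), (k : ℝ) ≤ 3 * N - 1 := fun k hk => by
    have : (k : ℝ) + 1 ≤ 3 * N := by exact_mod_cast mem_range.1 hk
    linarith
  have hpow : (2 : ℝ) ^ n - 2 ≠ 0 := by
    have : (2 : ℝ) ^ 2 ≤ 2 ^ n := pow_le_pow_right₀ one_le_two hn
    linarith
  rw [← two_pow_sub_two_mul_iterInt_eq hφ (fun t ht => hφsupp t fun h => ht.not_ge h.1)
    (fun t ht => hφsupp t fun h => ht.not_ge h.2) href hpsum hs (by omega), one_div,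
    inv_mul_cancel_left₀ hpow]

theorem nTuple_integral_at_support_endpoint
    (N : ℕ) (hN : 2 ≤ N) (φ : ℝ → ℝ)
    (hφmeas : Measurable φ) (hφbdd : ∃ B, ∀ t, |φ t| ≤ B)
    (hφsupp : ∀ t : ℝ, t ∉ Set.Icc (0 : ℝ) (3 * N - 1) → φ t = 0)
    (hφint : ∫ t : ℝ, φ t = 1)
    (p : ℕ → ℝ)
    (href : ∀ᵐ x : ℝ ∂volume, φ x = ∑ k ∈ Finset.range (3 * N), p k * φ (2 * x - (k : ℝ)))
    (hpsum : ∑ k ∈ Finset.range (3 * N), p k = 2)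
    (n : ℕ) (hn : 2 ≤ n) :
    iterInt φ n (3 * (N : ℝ) - 1) =
      (1 / (2 ^ n - 2)) *
        ∑ i ∈ Finset.Icc 1 (n - 1), ∑ k ∈ Finset.range (3 * N),
          p k * (3 * (N : ℝ) - 1 - (k : ℝ)) ^ i / i.factorial *
            iterInt φ (n - i) (3 * (N : ℝ) - 1) :=
  nTuple_integral_at_support_endpoint_general N φ hφmeas hφbdd hφsupp p href hpsum n hn
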